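/- arXiv:1908.02611 — 2 statements merged into one kernel-verified Lean document; each statement's English description precedes it below -/
import Mathlib

section
/- Let F be a field and let f(t) = tⁿ + a₁t^{n-1} + ⋯ + a_{n-1}t + aₙ be a monic polynomial that is irreducible in F[t]. Let B ∈ Mₙ(F) be the companion matrix of f, i.e. the matrix with entries B_{i+1,i} = 1 for 1 ≤ i ≤ n−1, last column equal to (−aₙ, −a_{n-1}, …, −a₁)ᵀ, and all other entries zero. Then B is strongly independent over F. -/
open Matrix Polynomial

/-- An `n`-tuple `(B 0, …, B (n-1))` of `n × n` matrices over a field `F` is strongly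
independent over `F` if for every nonzero column vector `v ∈ F^{n×1}` the vectors
`B 0 v, …, B (n-1) v` are linearly independent over `F`. -/
def StronglyIndependent (F : Type*) [Field F] {n : ℕ}
    (B : Fin n → Matrix (Fin n) (Fin n) F) : Prop :=
  ∀ v : Fin n → F, v ≠ 0 → LinearIndependent F (fun i => (B i).mulVec v)

private lemma sum_mulVec' {F : Type*} [Field F] {n : ℕ} {ι : Type*} (s : Finset ι)
    (M : ι → Matrix (Fin n) (Fin n) F) (v : Fin n → F) :
    (∑ i ∈ s, M i) *ᵥ v = ∑ i ∈ s, (M i) *ᵥ v := by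
  ext j
  simp only [Matrix.mulVec, dotProduct, Matrix.sum_apply, Finset.sum_apply,
    Finset.sum_mul]
  rw [Finset.sum_comm]

theorem companion_matrix_strongly_independent
    {F : Type*} [Field F] {n : ℕ} (hn : 0 < n) (a : Fin n → F)
    (hirr : Irreducible
      (Polynomial.X ^ n + ∑ i : Fin n, Polynomial.C (a i) * Polynomial.X ^ (n - 1 - (i : ℕ)) :
        Polynomial F))
    (B : Matrix (Fin n) (Fin n) F)
    (hB : B = Matrix.of fun i j : Fin n =>
      if (j : ℕ) = n - 1 then -a i.rev
      else if (i : ℕ) = (j : ℕ) + 1 then 1 else 0) :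
    StronglyIndependent F (fun i : Fin n => B ^ (i : ℕ)) := by
  intro v hv
  revert v hv
  set f : Polynomial F :=
    X ^ n + ∑ i : Fin n, C (a i) * X ^ (n - 1 - (i : ℕ)) with hf
  -- columns of B
  have hcol : ∀ k : ℕ, ∀ hk : k + 1 < n,
      B *ᵥ Pi.single (⟨k, Nat.lt_of_succ_lt hk⟩ : Fin n) (1:F) = Pi.single ⟨k+1, hk⟩ (1:F) := by
    intro k hk
    subst hB
    ext i
    simp only [Matrix.mulVec_single, Matrix.of_apply, mul_one, Pi.single_apply]
    split_ifs <;> simp_all [Fin.ext_iff] <;> omega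
  -- powers on e0
  have hpow : ∀ k : ℕ, ∀ hk : k < n,
      (B ^ k) *ᵥ Pi.single (⟨0, hn⟩ : Fin n) (1:F) = Pi.single (⟨k, hk⟩ : Fin n) (1:F) := by
    intro k
    induction k with
    | zero => intro hk; rw [pow_zero, Matrix.one_mulVec]
    | succ k ih =>
      intro hk
      rw [pow_succ', ← Matrix.mulVec_mulVec, ih (Nat.lt_of_succ_lt hk), hcol k hk]
  -- last column
  have hlast : B *ᵥ Pi.single (⟨n-1, Nat.sub_lt hn one_pos⟩ : Fin n) (1:F)
      = fun i => -a i.rev := by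
    subst hB
    ext i
    simp only [Matrix.mulVec_single, Matrix.of_apply, mul_one]
    simp
  -- f(B) kills e0
  have hfB0 : (aeval B f) *ᵥ Pi.single (⟨0, hn⟩ : Fin n) (1:F) = 0 := by
    have haf : aeval B f = B ^ n + ∑ i : Fin n, a i • B ^ (n - 1 - (i : ℕ)) := by
      simp [hf, Algebra.smul_def, algebraMap_eq, map_sum]
    rw [haf, Matrix.add_mulVec, sum_mulVec']
    have h1 : (B ^ n) *ᵥ Pi.single (⟨0, hn⟩ : Fin n) (1:F) = fun i => -a i.rev := by
      have hBn : B ^ n = B * B ^ (n-1) := by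
        rw [← pow_succ']
        congr 1
        omega
      rw [hBn, ← Matrix.mulVec_mulVec, hpow (n-1) (Nat.sub_lt hn one_pos)]
      exact hlast
    rw [h1]
    have h2 : ∀ i : Fin n, (a i • B ^ (n - 1 - (i : ℕ))) *ᵥ Pi.single (⟨0, hn⟩ : Fin n) (1:F)
        = a i • (Pi.single i.rev (1:F) : Fin n → F) := by
      intro i
      rw [Matrix.smul_mulVec, hpow (n - 1 - (i : ℕ)) (by omega)]
      ext j
      simp only [Pi.smul_apply, Pi.single_apply, smul_eq_mul]
      by_cases h : (j:ℕ) = n - 1 - (i:ℕ)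
      · rw [if_pos (Fin.ext (by simpa using h)),
          if_pos (Fin.ext (by rw [Fin.val_rev]; omega))]
      · rw [if_neg (fun hc => h (by simpa using congrArg Fin.val hc)),
          if_neg (fun hc => h (by have := congrArg Fin.val hc; rw [Fin.val_rev] at this; omega))]
    rw [Finset.sum_congr rfl fun i _ => h2 i]
    ext j
    simp only [Pi.add_apply, Finset.sum_apply, Pi.smul_apply, Pi.zero_apply, smul_eq_mul,
      Pi.single_apply]
    have hsum : ∑ i : Fin n, a i * (if j = i.rev then (1:F) else 0) = a j.rev := by
      rw [Finset.sum_eq_single j.rev]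
      · rw [if_pos (Fin.rev_rev j).symm, mul_one]
      · intro b _ hb
        rw [if_neg, mul_zero]
        intro hc
        exact hb (by rw [hc, Fin.rev_rev])
      · simp
    rw [hsum]
    ring
  -- f(B) = 0
  have hfB : aeval B f = 0 := by
    ext i j
    have hj : (Pi.single j (1:F) : Fin n → F)
        = (B ^ (j:ℕ)) *ᵥ Pi.single (⟨0, hn⟩ : Fin n) (1:F) := by
      rw [hpow (j:ℕ) j.isLt]
    have h0 : (aeval B f) *ᵥ Pi.single j (1:F) = 0 := by
      rw [hj, Matrix.mulVec_mulVec]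
      have hcomm : aeval B f * B ^ (j:ℕ) = B ^ (j:ℕ) * aeval B f := by
        have h1 := _root_.map_mul (aeval B) f (X ^ (j:ℕ))
        have h2 := _root_.map_mul (aeval B) (X ^ (j:ℕ)) f
        rw [mul_comm] at h2
        rw [h2] at h1
        simpa using h1.symm
      rw [hcomm, ← Matrix.mulVec_mulVec, hfB0, Matrix.mulVec_zero]
    have := congrFun h0 i
    simpa [Matrix.mulVec_single] using this
  -- degree of f is n
  have hdeg : f.natDegree = n := by
    have hs : (∑ i : Fin n, C (a i) * X ^ (n - 1 - (i : ℕ)) : Polynomial F).natDegree < n := by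
      refine lt_of_le_of_lt (Polynomial.natDegree_sum_le_of_forall_le _ _ ?_)
        (by omega : n - 1 < n)
      intro i _
      exact le_trans (Polynomial.natDegree_C_mul_X_pow_le (a i) (n - 1 - (i:ℕ))) (by omega)
    rw [hf, Polynomial.natDegree_add_eq_left_of_natDegree_lt, natDegree_X_pow]
    rwa [natDegree_X_pow]
  -- main argument
  intro v hv
  rw [Fintype.linearIndependent_iff]
  intro c hc
  by_contra hcz
  push_neg at hcz
  set p : Polynomial F := ∑ i : Fin n, C (c i) * X ^ (i : ℕ) with hp
  have hpne : p ≠ 0 := by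
    intro h
    obtain ⟨i, hi⟩ := hcz
    apply hi
    have := congrArg (fun q => Polynomial.coeff q (i:ℕ)) h
    simp only [hp] at this
    rw [Polynomial.finset_sum_coeff] at this
    simp only [Polynomial.coeff_C_mul, Polynomial.coeff_X_pow] at this
    rw [Finset.sum_eq_single i] at this
    · simpa using this
    · intro b _ hb
      rw [if_neg, mul_zero]
      exact fun h => hb (Fin.ext h.symm)
    · simp
  have hpdeg : p.natDegree < n := by
    rw [hp]
    refine lt_of_le_of_lt (Polynomial.natDegree_sum_le_of_forall_le _ _ ?_)
      (by omega : n - 1 < n)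
    intro i _
    exact le_trans (Polynomial.natDegree_C_mul_X_pow_le (c i) (i:ℕ)) (by omega)
  have hnd : ¬ f ∣ p := by
    intro hdvd
    have := Polynomial.natDegree_le_of_dvd hdvd hpne
    omega
  have hcop : IsCoprime f p := hirr.coprime_iff_not_dvd.mpr hnd
  obtain ⟨u, w, huw⟩ := hcop
  have hpBv : (aeval B p) *ᵥ v = 0 := by
    have hap : aeval B p = ∑ i : Fin n, c i • B ^ (i:ℕ) := by
      simp [hp, Algebra.smul_def, algebraMap_eq, map_sum]
    rw [hap, sum_mulVec', ← hc]
    apply Finset.sum_congr rfl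
    intro i _
    rw [Matrix.smul_mulVec]
  have hone : (aeval B w) * (aeval B p) = 1 := by
    have h := congrArg (aeval B) huw
    simp only [map_add, _root_.map_mul, _root_.map_one, hfB, mul_zero, zero_add] at h
    exact h
  apply hv
  calc v = ((aeval B w) * (aeval B p)) *ᵥ v := by rw [hone, Matrix.one_mulVec]
    _ = (aeval B w) *ᵥ ((aeval B p) *ᵥ v) := by rw [Matrix.mulVec_mulVec]
    _ = 0 := by rw [hpBv, Matrix.mulVec_zero]
end

section
/- Let A ∈ Mₙ(ℤ) and let {F_m} be a Følner sequence in ℕ. A Borel probability measure μ on 𝕋ⁿ is an ergodic T_A-invariant measure if and only if lim_{m→∞} (1/|F_m|) Σ_{j ∈ F_m} μ̂(A^j k + l) = μ̂(k) μ̂(l) for all k, l ∈ ℤ^{n×1}. -/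
open MeasureTheory Filter Matrix Topology
open scoped symmDiff

instance : Fact ((0:ℝ) < 1) := ⟨one_pos⟩

/-- The `n`-torus `𝕋ⁿ = ℝⁿ/ℤⁿ`, as the product of `n` copies of `ℝ/ℤ`. -/
abbrev Torus (n : ℕ) := Fin n → AddCircle (1 : ℝ)

/-- The `×A` map `T_A` on the `n`-torus, `T_A(x + ℤⁿ) = xA + ℤⁿ` for row vectors `x`. -/
noncomputable def TA {n : ℕ} (A : Matrix (Fin n) (Fin n) ℤ) (x : Torus n) : Torus n :=
  fun j => ∑ i, A i j • x i

/-- The Fourier coefficient `μ̂(k) = ∫_{𝕋ⁿ} z^k dμ(z)` of a measure `μ` on the `n`-torus,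
where `z^k = z₁^{k₁} ⋯ zₙ^{kₙ}`. -/
noncomputable def fc {n : ℕ} (μ : Measure (Torus n)) (k : Fin n → ℤ) : ℂ :=
  ∫ x, ∏ i, fourier (k i) (x i) ∂μ

/-- A Følner sequence in `ℕ`: a sequence of nonempty finite subsets `F m ⊆ ℕ` with
`|(F m + m') ∆ F m| / |F m| → 0` for every `m' ∈ ℕ`. -/
def IsFolner (F : ℕ → Finset ℕ) : Prop :=
  (∀ m, (F m).Nonempty) ∧
  ∀ m' : ℕ, Tendsto
    (fun m => ((((F m).image (· + m')) ∆ (F m)).card : ℝ) / (F m).card) atTop (𝓝 0)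

/-!
Once `μ` is `T_A`-invariant, let `U` be the Koopman operator `g ↦ g ∘ T_A` on `L²(μ)` and `e_k`
the character `z ↦ z^k` in `L²(μ)`. Since `e_k ∘ T_A = e_{Ak}`, we have
`μ̂(A^j k + l) = ⟪e_{-l}, U^j e_k⟫`, so by the mean ergodic theorem along the Følner sequence the
averages converge to `⟪e_{-l}, P e_k⟫`, where `P` is the orthogonal projection onto the
`U`-invariant functions. The limit formula thus says exactly that `P e_k = μ̂(k) • 1` for all `k`.
As the characters span a dense subspace of `L²(μ)`, this holds iff the invariant functions are
the constants, i.e. iff `μ` is ergodic.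

Invariance of `μ` comes from the case `l = 0`: shifting a Følner average by one step does not
change its limit, so `μ̂(Ak) = μ̂(k)`, and a finite measure on the torus is determined by its
Fourier coefficients.
-/

open Finset UnitAddTorus
open scoped InnerProductSpace

section Folner

variable {𝕜 E : Type*} [RCLike 𝕜] [NormedAddCommGroup E] [NormedSpace 𝕜 E]

theorem norm_sum_sub_sum_le_card_symmDiff_mul {ι : Type*} [DecidableEq ι] (s t : Finset ι)
    {u : ι → E} {C : ℝ} (hu : ∀ j, ‖u j‖ ≤ C) :
    ‖∑ j ∈ s, u j - ∑ j ∈ t, u j‖ ≤ #(s ∆ t) * C := by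
  have hsum (r : Finset ι) : ‖∑ j ∈ r, u j‖ ≤ #r * C := by
    simpa using norm_sum_le_of_le r fun j _ => hu j
  rw [← sum_inter_add_sum_sdiff s t u, ← sum_inter_add_sum_sdiff t s u, inter_comm t s,
    add_sub_add_left_eq_sub, symmDiff_def, sup_eq_union,
    card_union_of_disjoint disjoint_sdiff_sdiff, Nat.cast_add, add_mul]
  exact (norm_sub_le _ _).trans (add_le_add (hsum _) (hsum _))

theorem ContinuousLinearMap.norm_pow_apply_le {T : E →L[𝕜] E} (hT : ‖T‖ ≤ 1) (j : ℕ) (x : E) :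
    ‖(T ^ j) x‖ ≤ ‖x‖ := by
  induction j generalizing x with
  | zero => simp
  | succ j ih => exact (ih _).trans (by simpa using T.le_of_opNorm_le hT x)

theorem norm_inv_card_smul_sum_le {ι : Type*} (s : Finset ι) {u : ι → E} {C : ℝ} (hC : 0 ≤ C)
    (hu : ∀ j, ‖u j‖ ≤ C) : ‖(#s : 𝕜)⁻¹ • ∑ j ∈ s, u j‖ ≤ C := by
  rcases s.eq_empty_or_nonempty with rfl | hs
  · simpa using hC
  have hcard : (0 : ℝ) < #s := by exact_mod_cast hs.card_pos
  rw [norm_smul, norm_inv, RCLike.norm_natCast, inv_mul_le_iff₀ hcard]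
  simpa using norm_sum_le_of_le s fun j _ => hu j

namespace IsFolner

variable {F : ℕ → Finset ℕ}

theorem inv_card_smul_sum_const (hF : IsFolner F) (m : ℕ) (x : E) :
    (#(F m) : 𝕜)⁻¹ • ∑ _j ∈ F m, x = x := by
  rw [sum_const, ← Nat.cast_smul_eq_nsmul 𝕜, smul_smul,
    inv_mul_cancel₀ (by exact_mod_cast (hF.1 m).card_pos.ne'), one_smul]

theorem tendsto_inv_card_smul_sum_succ_sub (hF : IsFolner F) {u : ℕ → E} {C : ℝ}
    (hu : ∀ j, ‖u j‖ ≤ C) :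
    Tendsto (fun m => (#(F m) : 𝕜)⁻¹ • ∑ j ∈ F m, (u (j + 1) - u j)) atTop (𝓝 0) := by
  refine squeeze_zero_norm (fun m => ?_) (by simpa using (hF.2 1).mul_const C)
  have hcard : (0 : ℝ) < #(F m) := by exact_mod_cast (hF.1 m).card_pos
  rw [sum_sub_distrib, ← sum_image (f := u) fun a _ b _ h => by omega, norm_smul, norm_inv,
    RCLike.norm_natCast, div_mul_eq_mul_div, le_div_iff₀ hcard, mul_comm, ← mul_assoc,
    mul_inv_cancel₀ hcard.ne', one_mul]
  exact norm_sum_sub_sum_le_card_symmDiff_mul _ _ hu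

theorem tendsto_inv_card_smul_sum_succ (hF : IsFolner F) {u : ℕ → E} {C : ℝ}
    (hu : ∀ j, ‖u j‖ ≤ C) {L : E}
    (h : Tendsto (fun m => (#(F m) : 𝕜)⁻¹ • ∑ j ∈ F m, u j) atTop (𝓝 L)) :
    Tendsto (fun m => (#(F m) : 𝕜)⁻¹ • ∑ j ∈ F m, u (j + 1)) atTop (𝓝 L) := by
  simpa [sum_sub_distrib, smul_sub] using (hF.tendsto_inv_card_smul_sum_succ_sub (𝕜 := 𝕜) hu).add h

theorem tendsto_inv_card_smul_sum_pow_apply_of_mem_closure (hF : IsFolner F) {T : E →L[𝕜] E}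
    (hT : ‖T‖ ≤ 1) {x : E}
    (hx : x ∈ closure (LinearMap.range ((T - 1 : E →L[𝕜] E) : E →ₗ[𝕜] E) : Set E)) :
    Tendsto (fun m => (#(F m) : 𝕜)⁻¹ • ∑ j ∈ F m, (T ^ j) x) atTop (𝓝 0) := by
  set avg : ℕ → E →L[𝕜] E := fun m => (#(F m) : 𝕜)⁻¹ • ∑ j ∈ F m, T ^ j
  have havg (m : ℕ) (y : E) : avg m y = (#(F m) : 𝕜)⁻¹ • ∑ j ∈ F m, (T ^ j) y := by
    simp [avg]
  have hlip (m : ℕ) : LipschitzWith 1 (avg m) := by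
    refine LipschitzWith.of_dist_le_mul fun y z => ?_
    rw [dist_eq_norm, dist_eq_norm, ← map_sub, havg, NNReal.coe_one, one_mul]
    exact norm_inv_card_smul_sum_le _ (norm_nonneg _) fun j => T.norm_pow_apply_le hT j _
  have hclosed : IsClosed {y | Tendsto (avg · y) atTop (𝓝 0)} :=
    (LipschitzWith.uniformEquicontinuous (fun m => ⇑(avg m)) 1
      hlip).equicontinuous.isClosed_setOfPred_tendsto continuous_const
  simp only [← havg]
  refine closure_minimal ?_ hclosed hx
  rintro _ ⟨w, rfl⟩
  refine (hF.tendsto_inv_card_smul_sum_succ_sub (𝕜 := 𝕜) (u := fun j => (T ^ j) w)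
    fun j => T.norm_pow_apply_le hT j w).congr fun m => ?_
  simp only [havg, ContinuousLinearMap.coe_coe, _root_.sub_apply, one_apply_eq_self, map_sub,
    pow_succ, mul_apply_eq_comp]

end IsFolner

end Folner

section MeanErgodic

variable {𝕜 E : Type*} [RCLike 𝕜] [NormedAddCommGroup E] [InnerProductSpace 𝕜 E]
  {T : E →L[𝕜] E}

theorem ContinuousLinearMap.orthogonal_range_sub_one_le_eqLocus (hT : ‖T‖ ≤ 1) :
    (LinearMap.range ((T - 1 : E →L[𝕜] E) : E →ₗ[𝕜] E))ᗮ ≤ T.eqLocus (1 : E →L[𝕜] E) := by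
  intro x hx
  have hinner (y : E) : ⟪T y, x⟫_𝕜 = ⟪y, x⟫_𝕜 := by
    simpa [inner_sub_left, sub_eq_zero] using
      (Submodule.mem_orthogonal _ _).1 hx _ (LinearMap.mem_range_self _ y)
  refine eq_of_norm_le_re_inner_eq_norm_sq (𝕜 := 𝕜)
    ((T.le_of_opNorm_le hT x).trans_eq (one_mul _)) ?_
  simp [hinner]

namespace IsFolner

variable {F : ℕ → Finset ℕ} [CompleteSpace E]

theorem tendsto_inv_card_smul_sum_pow_apply (hF : IsFolner F) (hT : ‖T‖ ≤ 1) (x : E) :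
    Tendsto (fun m => (#(F m) : 𝕜)⁻¹ • ∑ j ∈ F m, (T ^ j) x) atTop
      (𝓝 ((T.eqLocus (1 : E →L[𝕜] E)).starProjection x)) := by
  set K := T.eqLocus (1 : E →L[𝕜] E)
  have hker : x - K.starProjection x ∈
      closure (LinearMap.range ((T - 1 : E →L[𝕜] E) : E →ₗ[𝕜] E) : Set E) := by
    rw [← Submodule.topologicalClosure_coe, ← Submodule.orthogonal_orthogonal_eq_closure]
    exact Submodule.orthogonal_le (T.orthogonal_range_sub_one_le_eqLocus hT)
      (K.sub_starProjection_mem_orthogonal x)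
  have hfix (j : ℕ) : (T ^ j) (K.starProjection x) = K.starProjection x := by
    rw [pow_apply_eq_iterate]
    exact Function.iterate_fixed (LinearMap.mem_eqLocus.1 (K.starProjection_apply_mem x)) j
  have h := (hF.tendsto_inv_card_smul_sum_pow_apply_of_mem_closure hT hker).add_const
    (K.starProjection x)
  rw [zero_add] at h
  refine h.congr fun m => ?_
  simp only [map_sub, sum_sub_distrib, hfix, smul_sub, hF.inv_card_smul_sum_const, sub_add_cancel]

end IsFolner

end MeanErgodic

section Hilbert

variable {𝕜 E ι : Type*} [RCLike 𝕜] [NormedAddCommGroup E] [InnerProductSpace 𝕜 E]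
  {e : ι → E}

theorem eq_of_forall_inner_eq_of_topologicalClosure_span_eq_top [CompleteSpace E]
    (he : (Submodule.span 𝕜 (Set.range e)).topologicalClosure = ⊤) {x y : E}
    (h : ∀ i, ⟪e i, x⟫_𝕜 = ⟪e i, y⟫_𝕜) : x = y := by
  rw [Submodule.topologicalClosure_eq_top_iff, Submodule.eq_bot_iff] at he
  refine sub_eq_zero.1 (he _ ((Submodule.mem_orthogonal _ _).2 fun v hv => ?_))
  induction hv using Submodule.span_induction with
  | mem v hv => obtain ⟨i, rfl⟩ := hv; rw [inner_sub_right, h, sub_self]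
  | zero => exact inner_zero_left _
  | add v w _ _ hv hw => rw [inner_add_left, hv, hw, add_zero]
  | smul c v _ hv => rw [inner_smul_left, hv, mul_zero]

theorem Submodule.le_of_forall_starProjection_mem (K : Submodule 𝕜 E) [K.HasOrthogonalProjection]
    (he : (span 𝕜 (Set.range e)).topologicalClosure = ⊤) {W : Submodule 𝕜 E}
    (hW : IsClosed (W : Set E)) (h : ∀ i, K.starProjection (e i) ∈ W) : K ≤ W := by
  have hspan : span 𝕜 (Set.range e) ≤ W.comap (K.starProjection : E →ₗ[𝕜] E) :=
    span_le.2 <| Set.range_subset_iff.2 h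
  have hclosure := topologicalClosure_minimal _ hspan (hW.preimage K.starProjection.continuous)
  intro x hx
  rw [← K.starProjection_eq_self_iff.2 hx]
  exact hclosure (he ▸ mem_top)

end Hilbert

namespace MeasureTheory.MeasurePreserving

variable {α E : Type*} [MeasurableSpace α] {μ : Measure α} [IsFiniteMeasure μ] {f : α → α}
  {p : ENNReal} [NormedAddCommGroup E]

theorem ergodic_iff_forall_Lp_fixed_eq_const [Nontrivial E] (hf : MeasurePreserving f μ μ) :
    Ergodic f μ ↔
      ∀ g : Lp E p μ, Lp.compMeasurePreserving f hf g = g → ∃ c, g = Lp.const p μ c := by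
  refine ⟨fun h g hg => ?_, fun h => ⟨hf, ⟨fun s hs hfs => ?_⟩⟩⟩
  · obtain ⟨c, hc⟩ := h.eq_const_of_compMeasurePreserving_eq (congrArg Subtype.val hg)
    exact ⟨c, Subtype.ext hc⟩
  · obtain ⟨c, hc⟩ := exists_ne (0 : E)
    obtain ⟨d, hd⟩ := h (indicatorConstLp p hs (measure_ne_top μ s) c) (by
      simp only [Lp.indicatorConstLp_compMeasurePreserving, hfs])
    have hind : s.indicator (fun _ => c) =ᵐ[μ] fun _ => d :=
      indicatorConstLp_coeFn.symm.trans (hd ▸ Lp.coeFn_const p μ d)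
    exact .of_indicator_const ((EventuallyConst.const d).congr hind.symm) hc

end MeasureTheory.MeasurePreserving

theorem AddCircle.toCircle_sum {T : ℝ} {ι : Type*} (s : Finset ι) (y : ι → AddCircle T) :
    toCircle (∑ i ∈ s, y i) = ∏ i ∈ s, toCircle (y i) :=
  map_prod AddCircle.toCircle_addChar.toMonoidHom (fun i => Multiplicative.ofAdd (y i)) s

theorem UnitAddTorus.mFourier_apply_eq_toCircle {d : Type*} [Fintype d] (k : d → ℤ)
    (x : UnitAddTorus d) :
    mFourier k x = AddCircle.toCircle (∑ i, k i • x i) := by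
  rw [AddCircle.toCircle_sum]
  exact (map_prod Circle.coeHom _ _).symm

theorem continuous_TA {n : ℕ} (A : Matrix (Fin n) (Fin n) ℤ) : Continuous (TA A) := by
  unfold TA; fun_prop

theorem mFourier_apply_TA {n : ℕ} (A : Matrix (Fin n) (Fin n) ℤ) (k : Fin n → ℤ) (x : Torus n) :
    mFourier k (TA A x) = mFourier (A *ᵥ k) x := by
  rw [mFourier_apply_eq_toCircle, mFourier_apply_eq_toCircle]
  congr 2
  simp only [TA, smul_sum, smul_smul, mulVec, dotProduct, sum_smul]
  rw [sum_comm]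
  simp only [mul_comm]

theorem UnitAddTorus.measure_ext_of_integral_mFourier_eq {d : Type*} [Fintype d]
    {μ ν : Measure (UnitAddTorus d)} [IsFiniteMeasure μ] [IsFiniteMeasure ν]
    (h : ∀ k, ∫ x, mFourier k x ∂μ = ∫ x, mFourier k x ∂ν) : μ = ν := by
  let I (ρ : Measure (UnitAddTorus d)) [IsFiniteMeasure ρ] : C(UnitAddTorus d, ℂ) →L[ℂ] ℂ :=
    (L1.integralCLM' ℂ).comp (ContinuousMap.toLp 1 ρ ℂ)
  have hI (ρ : Measure (UnitAddTorus d)) [IsFiniteMeasure ρ] (f : C(UnitAddTorus d, ℂ)) :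
      I ρ f = ∫ x, f x ∂ρ := by
    rw [ContinuousLinearMap.comp_apply, ← L1.integral_eq', L1.integral_eq_integral]
    exact integral_congr_ae (ContinuousMap.coeFn_toLp ρ f)
  have hIμν : I μ = I ν := by
    refine ContinuousLinearMap.ext_on (s := Set.range mFourier) ?_ ?_
    · exact Submodule.dense_iff_topologicalClosure_eq_top.2 span_mFourier_closure_eq_top
    · rintro _ ⟨k, rfl⟩
      rw [hI, hI, h]
  refine ext_of_forall_integral_eq_of_IsFiniteMeasure fun f => Complex.ofReal_injective ?_
  let g : C(UnitAddTorus d, ℂ) := ⟨fun x => f x, by fun_prop⟩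
  rw [← integral_complex_ofReal, ← integral_complex_ofReal]
  exact (hI μ g).symm.trans ((congrArg (· g) hIμν).trans (hI ν g))

section Koopman

variable {α : Type*} [MeasurableSpace α] {μ : Measure α} {f : α → α}

noncomputable def koopman (hf : MeasurePreserving f μ μ) : Lp ℂ 2 μ →L[ℂ] Lp ℂ 2 μ :=
  (Lp.compMeasurePreservingₗᵢ ℂ f hf).toContinuousLinearMap

theorem koopman_apply (hf : MeasurePreserving f μ μ) (g : Lp ℂ 2 μ) :
    koopman hf g = Lp.compMeasurePreserving f hf g :=
  rfl

theorem norm_koopman_le (hf : MeasurePreserving f μ μ) : ‖koopman hf‖ ≤ 1 :=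
  LinearIsometry.norm_toContinuousLinearMap_le _

noncomputable abbrev fixedLp (hf : MeasurePreserving f μ μ) : Submodule ℂ (Lp ℂ 2 μ) :=
  (koopman hf).eqLocus (1 : Lp ℂ 2 μ →L[ℂ] Lp ℂ 2 μ)

end Koopman

section Characters

variable {n : ℕ} (μ : Measure (Torus n))

theorem fc_eq_integral_mFourier (k : Fin n → ℤ) : fc μ k = ∫ x, mFourier k x ∂μ :=
  rfl

theorem norm_fc_le_one [IsProbabilityMeasure μ] (k : Fin n → ℤ) : ‖fc μ k‖ ≤ 1 := by
  rw [fc_eq_integral_mFourier]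
  simpa using norm_integral_le_of_norm_le_const (μ := μ) (f := fun x => mFourier k x)
    (.of_forall fun x => ((mFourier k).norm_coe_le_norm x).trans_eq mFourier_norm)

theorem fc_zero [IsProbabilityMeasure μ] : fc μ 0 = 1 := by
  simp [fc]

variable [IsFiniteMeasure μ]

noncomputable def charLp (k : Fin n → ℤ) : Lp ℂ 2 μ :=
  ContinuousMap.toLp 2 μ ℂ (mFourier k)

theorem coeFn_charLp (k : Fin n → ℤ) : charLp μ k =ᵐ[μ] mFourier k :=
  ContinuousMap.coeFn_toLp μ (mFourier k)

theorem inner_charLp (k l : Fin n → ℤ) : ⟪charLp μ k, charLp μ l⟫_ℂ = fc μ (l - k) := by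
  rw [L2.inner_def]
  refine integral_congr_ae ?_
  filter_upwards [coeFn_charLp μ k, coeFn_charLp μ l] with x hk hl
  rw [hk, hl, RCLike.inner_apply, ← mFourier_neg, ← mFourier_add, ← sub_eq_add_neg]
  rfl

theorem charLp_zero : charLp μ 0 = Lp.const 2 μ 1 := by
  refine Lp.ext ((coeFn_charLp μ 0).trans ?_)
  filter_upwards [Lp.coeFn_const 2 μ (1 : ℂ)] with x hx
  rw [hx, mFourier_zero]
  rfl

theorem Lp_const_eq_smul_charLp_zero (c : ℂ) : Lp.const 2 μ c = c • charLp μ 0 := by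
  rw [charLp_zero]
  have h := (Lp.constₗ 2 μ ℂ).map_smul c (1 : ℂ)
  rwa [smul_eq_mul, mul_one] at h

theorem topologicalClosure_span_charLp :
    (Submodule.span ℂ (Set.range (charLp μ))).topologicalClosure = ⊤ := by
  unfold charLp
  simpa only [Submodule.map_span, ContinuousLinearMap.coe_coe, ← Set.range_comp,
    Function.comp_def] using
    (ContinuousMap.toLp_denseRange ℂ μ ℂ (by norm_num)).topologicalClosure_map_submodule
      span_mFourier_closure_eq_top

variable {μ} {A : Matrix (Fin n) (Fin n) ℤ}

theorem measurePreserving_TA_of_fc_mulVec (h : ∀ k, fc μ (A *ᵥ k) = fc μ k) :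
    MeasurePreserving (TA A) μ μ := by
  refine ⟨(continuous_TA A).measurable, measure_ext_of_integral_mFourier_eq fun k => ?_⟩
  rw [integral_map (continuous_TA A).aemeasurable (mFourier k).continuous.aestronglyMeasurable]
  simp_rw [mFourier_apply_TA]
  exact h k

theorem koopman_pow_charLp (hA : MeasurePreserving (TA A) μ μ) (j : ℕ) (k : Fin n → ℤ) :
    (koopman hA ^ j) (charLp μ k) = charLp μ ((A ^ j) *ᵥ k) := by
  induction j with
  | zero => simp
  | succ j ih =>
    rw [pow_succ', mul_apply_eq_comp, ih, koopman_apply, pow_succ', ← mulVec_mulVec]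
    refine Lp.ext ((Lp.coeFn_compMeasurePreserving _ hA).trans ?_)
    filter_upwards [hA.quasiMeasurePreserving.ae_eq (coeFn_charLp μ (A ^ j *ᵥ k)),
      coeFn_charLp μ (A *ᵥ (A ^ j *ᵥ k))] with x hx hx'
    simp only [Function.comp_apply] at hx ⊢
    rw [hx, hx', mFourier_apply_TA]

theorem tendsto_avg_fc_inner_starProjection {F : ℕ → Finset ℕ} (hF : IsFolner F)
    (hA : MeasurePreserving (TA A) μ μ) (k l : Fin n → ℤ) :
    Tendsto (fun m => (1 / (#(F m) : ℂ)) * ∑ j ∈ F m, fc μ ((A ^ j) *ᵥ k + l)) atTop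
      (𝓝 ⟪charLp μ (-l), (fixedLp hA).starProjection (charLp μ k)⟫_ℂ) := by
  refine ((tendsto_const_nhds (x := charLp μ (-l))).inner
    (hF.tendsto_inv_card_smul_sum_pow_apply (norm_koopman_le hA) (charLp μ k))).congr
    fun m => ?_
  simp only [inner_smul_right, inner_sum, koopman_pow_charLp, inner_charLp, sub_neg_eq_add,
    one_div]

end Characters

section ErgodicTA

variable {n : ℕ} {μ : Measure (Torus n)} [IsProbabilityMeasure μ] {A : Matrix (Fin n) (Fin n) ℤ}

theorem fc_mulVec_eq_of_tendsto {F : ℕ → Finset ℕ} (hF : IsFolner F)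
    (h : ∀ k, Tendsto (fun m => (#(F m) : ℂ)⁻¹ • ∑ j ∈ F m, fc μ ((A ^ j) *ᵥ k)) atTop
      (𝓝 (fc μ k))) (k : Fin n → ℤ) :
    fc μ (A *ᵥ k) = fc μ k := by
  refine tendsto_nhds_unique (h (A *ᵥ k)) ?_
  simpa only [mulVec_mulVec, ← pow_succ] using
    hF.tendsto_inv_card_smul_sum_succ (fun j => norm_fc_le_one μ _) (h k)

theorem ergodic_TA_iff_starProjection_charLp (hA : MeasurePreserving (TA A) μ μ) :
    Ergodic (TA A) μ ↔ ∀ k, (fixedLp hA).starProjection (charLp μ k) = fc μ k • charLp μ 0 := by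
  set K := fixedLp hA
  rw [hA.ergodic_iff_forall_Lp_fixed_eq_const (E := ℂ) (p := 2)]
  constructor
  · intro hconst k
    have h0 : charLp μ 0 ∈ K :=
      LinearMap.mem_eqLocus.2 (by simpa using koopman_pow_charLp hA 1 0)
    obtain ⟨c, hc⟩ := hconst _ (LinearMap.mem_eqLocus.1 (K.starProjection_apply_mem (charLp μ k)))
    rw [Lp_const_eq_smul_charLp_zero] at hc
    have hck : c = fc μ k := by
      have h := K.inner_starProjection_left_eq_right (charLp μ 0) (charLp μ k)
      rw [K.starProjection_eq_self_iff.2 h0, hc, inner_smul_right, inner_charLp, inner_charLp,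
        sub_self, fc_zero, mul_one, sub_zero] at h
      exact h.symm
    rw [hc, hck]
  · intro h g hg
    have hK : K ≤ ℂ ∙ charLp μ 0 :=
      K.le_of_forall_starProjection_mem (topologicalClosure_span_charLp μ)
        (Submodule.closed_of_finiteDimensional _)
        fun k => h k ▸ Submodule.smul_mem _ _ (Submodule.mem_span_singleton_self _)
    obtain ⟨c, hc⟩ := Submodule.mem_span_singleton.1 (hK (LinearMap.mem_eqLocus.2 hg))
    exact ⟨c, by rw [← hc, Lp_const_eq_smul_charLp_zero]⟩

end ErgodicTA

theorem ergodic_iff_fourierCoeff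
    {n : ℕ} (A : Matrix (Fin n) (Fin n) ℤ)
    (F : ℕ → Finset ℕ) (hF : IsFolner F)
    (μ : Measure (Torus n)) [IsProbabilityMeasure μ] :
    Ergodic (TA A) μ ↔
      ∀ k l : Fin n → ℤ,
        Tendsto
          (fun m => (1 / ((F m).card : ℂ)) * ∑ j ∈ F m, fc μ ((A ^ j).mulVec k + l))
          atTop (𝓝 (fc μ k * fc μ l)) := by
  constructor
  · intro herg k l
    have h := tendsto_avg_fc_inner_starProjection hF herg.toMeasurePreserving k l
    rwa [(ergodic_TA_iff_starProjection_charLp herg.toMeasurePreserving).1 herg k,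
      inner_smul_right, inner_charLp, sub_neg_eq_add, zero_add] at h
  · intro h
    have hA : MeasurePreserving (TA A) μ μ :=
      measurePreserving_TA_of_fc_mulVec <| fc_mulVec_eq_of_tendsto hF fun k => by
        simpa [one_div, fc_zero] using h k 0
    refine (ergodic_TA_iff_starProjection_charLp hA).2 fun k =>
      eq_of_forall_inner_eq_of_topologicalClosure_span_eq_top (topologicalClosure_span_charLp μ)
        fun p => ?_
    rw [inner_smul_right, inner_charLp, zero_sub]
    exact tendsto_nhds_unique (by simpa using tendsto_avg_fc_inner_starProjection hF hA k (-p))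
      (h k (-p))
end
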